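/- Let F₁ and F₂ be two facets of a polytope Q, let v be a vertex of Q, and let Q̃ = S_v(Q) be the one-point-suspension of Q at v with apices u and w. For i = 1,2, let F̃_i be the facet S_v(F_i) of Q̃ if v ∈ F_i, or either one of the facets F_i ∗ u or F_i ∗ w if v ∉ F_i. Then the dual distance between F̃₁ and F̃₂ in Q̃ is greater than or equal to the dual distance between F₁ and F₂ in Q. -/

import Mathlib

open scoped Pointwise

variable {V : Type*} [AddCommGroup V] [Module ℝ V]

/-- A polytope is the convex hull of a finite set of points. -/
def IsPolytope (P : Set V) : Prop :=
  ∃ S : Set V, S.Finite ∧ P = convexHull ℝ S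

/-- The dimension of a set: the dimension of its affine span. -/
noncomputable def adim (P : Set V) : ℕ :=
  Module.finrank ℝ (vectorSpan ℝ P)

/-- A face of a polytope: the set of maximizers over it of some linear functional. -/
def IsFaceOf (F P : Set V) : Prop :=
  ∃ l : V →ₗ[ℝ] ℝ, F = {x ∈ P | ∀ y ∈ P, l y ≤ l x}

/-- A vertex: a point whose singleton is a face. -/
def IsVertexOf (x : V) (P : Set V) : Prop := IsFaceOf {x} P

/-- A facet: a face of dimension `dim P - 1`. -/
def IsFacetOf (F P : Set V) : Prop := IsFaceOf F P ∧ adim F + 1 = adim P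

/-- A ridge: a face of dimension `dim P - 2`. -/
def IsRidgeOf (F P : Set V) : Prop := IsFaceOf F P ∧ adim F + 2 = adim P

def vertexSet (P : Set V) : Set V := {x | IsVertexOf x P}

/-- The graph of a polytope: vertices are its vertices, adjacency means being
the two endpoints of an edge (a one-dimensional face, i.e. the segment between
them is a face). -/
def polyGraph (P : Set V) : SimpleGraph V where
  Adj x y := x ≠ y ∧ IsVertexOf x P ∧ IsVertexOf y P ∧ IsFaceOf (segment ℝ x y) P
  symm := by
    constructor
    rintro x y ⟨hxy, hx, hy, hseg⟩
    exact ⟨hxy.symm, hy, hx, by rwa [segment_symm]⟩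
  loopless := by constructor; rintro x ⟨h, -⟩; exact h rfl

/-- Graph distance between two vertices of a polytope. -/
noncomputable def vertexDist (P : Set V) (x y : V) : ℕ := (polyGraph P).dist x y

/-- The combinatorial diameter of a polytope: the diameter of its graph. -/
noncomputable def polyDiam (P : Set V) : ℕ :=
  sSup {n | ∃ x y, IsVertexOf x P ∧ IsVertexOf y P ∧ vertexDist P x y = n}

noncomputable def numFacets (P : Set V) : ℕ := {F | IsFacetOf F P}.ncard

noncomputable def numVertices (P : Set V) : ℕ := (vertexSet P).ncard

/-- The dual graph of a polytope: nodes are its facets, two facets adjacent iff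
their intersection is a ridge. -/
def dualGraph (P : Set V) : SimpleGraph (Set V) where
  Adj F F' := F ≠ F' ∧ IsFacetOf F P ∧ IsFacetOf F' P ∧ IsRidgeOf (F ∩ F') P
  symm := by
    constructor
    rintro F F' ⟨hne, hF, hF', hr⟩
    exact ⟨hne.symm, hF', hF, by rwa [Set.inter_comm]⟩
  loopless := by constructor; rintro F ⟨h, -⟩; exact h rfl

/-- Dual distance between two facets. -/
noncomputable def dualDist (P F F' : Set V) : ℕ := (dualGraph P).dist F F'

/-- The dual diameter of a polytope. -/
noncomputable def dualDiam (P : Set V) : ℕ :=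
  sSup {n | ∃ F F', IsFacetOf F P ∧ IsFacetOf F' P ∧ dualDist P F F' = n}

/-- `Hdiam n d` : the maximum combinatorial diameter of a `d`-dimensional
polytope with `n` facets. -/
noncomputable def Hdiam (n d : ℕ) : ℕ :=
  sSup {δ | ∃ (N : ℕ) (P : Set (Fin N → ℝ)),
    IsPolytope P ∧ adim P = d ∧ numFacets P = n ∧ polyDiam P = δ}

/-- A spindle: a polytope with two distinguished vertices `u`, `v` such that
every facet contains exactly one of them. -/
structure IsSpindle (P : Set V) (u v : V) : Prop where
  poly : IsPolytope P
  vert_u : IsVertexOf u P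
  vert_v : IsVertexOf v P
  facet_cond : ∀ F, IsFacetOf F P → (u ∈ F ↔ v ∉ F)

/-- A prismatoid: a polytope with two designated parallel facets containing all
of its vertices. -/
structure IsPrismatoid (Q Qp Qm : Set V) : Prop where
  poly : IsPolytope Q
  facet_p : IsFacetOf Qp Q
  facet_m : IsFacetOf Qm Q
  parallel : ∃ (l : V →ₗ[ℝ] ℝ) (c₁ c₂ : ℝ), l ≠ 0 ∧ c₁ ≠ c₂ ∧
    (∀ x ∈ Qp, l x = c₁) ∧ (∀ x ∈ Qm, l x = c₂)
  verts : vertexSet Q ⊆ Qp ∪ Qm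

/-- A polytope is simplicial if every facet has exactly `dim P` vertices. -/
def IsSimplicial (P : Set V) : Prop :=
  ∀ F, IsFacetOf F P → (vertexSet F).ncard = adim P

/-- A polytope is simple if every vertex lies in exactly `dim P` facets. -/
def IsSimple (P : Set V) : Prop :=
  ∀ x, IsVertexOf x P → {F | IsFacetOf F P ∧ x ∈ F}.ncard = adim P

/-- `Qt` is the one-point-suspension of `Q` at the vertex `v`, with apices `u`
and `w`: `Q` lies in a hyperplane, `u` and `w` lie (strictly) on opposite sides
of it, `v` is in the open segment `[u,w]`, and `Qt = conv (Q ∪ {u,w})`. -/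
def IsOPS {V : Type*} [AddCommGroup V] [Module ℝ V]
    (Q Qt : Set V) (v u w : V) : Prop :=
  IsPolytope Q ∧ IsVertexOf v Q ∧
  (∃ (l : V →ₗ[ℝ] ℝ) (c : ℝ), (∀ x ∈ Q, l x = c) ∧ l u < c ∧ c < l w) ∧
  v ∈ openSegment ℝ u w ∧
  Qt = convexHull ℝ (Q ∪ {u, w})

/-! Intersecting with `Q` sends facets of `Qt` to facets of `Q`, and two adjacent facets of `Qt`
to equal or adjacent facets of `Q` (the common ridge either lies in `Q` or meets it in a ridge
of `Q`). Hence a shortest path from `F̃₁` to `F̃₂` projects to a path from `F₁` to `F₂` that is no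
longer. Since the distance between disconnected nodes is `0`, we also need the converse
connectivity: `F ↦ S_v(F)` or `F * u` maps adjacent facets of `Q` to adjacent facets of `Qt`, and
`F * u`, `F * w` are adjacent. -/

open Set

section Faces

variable {F K K' P R X : Set V}

theorem IsFaceOf.subset (h : IsFaceOf F P) : F ⊆ P := by
  obtain ⟨l, rfl⟩ := h
  exact fun x hx => hx.1

theorem IsFaceOf.isExtreme (h : IsFaceOf F P) : IsExtreme ℝ P F := by
  obtain ⟨l, rfl⟩ := h
  refine ⟨fun x hx => hx.1, fun x₁ hx₁ x₂ hx₂ x hx hseg => ⟨hx₁, fun y hy => ?_⟩⟩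
  obtain ⟨a, b, ha, hb, hab, rfl⟩ := hseg
  have hlx : l (a • x₁ + b • x₂) = a * l x₁ + b * l x₂ := by simp
  have key : a * (l (a • x₁ + b • x₂) - l x₁) = -(b * (l (a • x₁ + b • x₂) - l x₂)) := by
    linear_combination l (a • x₁ + b • x₂) * hab + hlx
  have : l (a • x₁ + b • x₂) ≤ l x₁ := by
    nlinarith [mul_nonneg hb.le (sub_nonneg.2 (hx.2 x₂ hx₂))]
  exact (hx.2 y hy).trans this

theorem IsFaceOf.convex (h : IsFaceOf F P) (hP : Convex ℝ P) : Convex ℝ F := by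
  obtain ⟨l, rfl⟩ := h
  refine fun x hx y hy a b ha hb hab => ⟨hP hx.1 hy.1 ha hb hab, fun z hz => ?_⟩
  have : l z = a * l z + b * l z := by rw [← add_mul, hab, one_mul]
  simp only [map_add, map_smul, smul_eq_mul]
  nlinarith [hx.2 z hz, hy.2 z hz]

theorem isFaceOf_setOf_eq {g : V →ₗ[ℝ] ℝ} {M : ℝ} (hle : ∀ y ∈ P, g y ≤ M)
    (hM : ∃ x ∈ P, g x = M) : IsFaceOf {x ∈ P | g x = M} P := by
  obtain ⟨x₀, hx₀, rfl⟩ := hM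
  refine ⟨g, Set.ext fun x => ⟨fun hx => ⟨hx.1, fun y hy => hx.2 ▸ hle y hy⟩,
    fun hx => ⟨hx.1, le_antisymm (hle x hx.1) (hx.2 x₀ hx₀)⟩⟩⟩

theorem IsFaceOf.inter (hK : IsFaceOf K P) (hK' : IsFaceOf K' P) (hne : (K ∩ K').Nonempty) :
    IsFaceOf (K ∩ K') P := by
  obtain ⟨g, rfl⟩ := hK
  obtain ⟨g', rfl⟩ := hK'
  obtain ⟨z, hz, hz'⟩ := hne
  refine ⟨g + g', Set.ext fun x => ⟨fun ⟨hx, hx'⟩ => ⟨hx.1, fun y hy => ?_⟩,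
    fun ⟨hxP, hx⟩ => ?_⟩⟩
  · simpa using add_le_add (hx.2 y hy) (hx'.2 y hy)
  · have hsum : g z + g' z ≤ g x + g' x := by simpa using hx z hz.1
    have h₁ := hz.2 x hxP
    have h₂ := hz'.2 x hxP
    exact ⟨⟨hxP, fun y hy => by linarith [hz.2 y hy]⟩, ⟨hxP, fun y hy => by linarith [hz'.2 y hy]⟩⟩

theorem IsFaceOf.inter_of_subset (hK : IsFaceOf K P) (hR : R ⊆ P) (hne : (K ∩ R).Nonempty) :
    IsFaceOf (K ∩ R) R := by
  obtain ⟨l, rfl⟩ := hK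
  obtain ⟨z, hzK, hzR⟩ := hne
  refine ⟨l, Set.ext fun x => ⟨fun ⟨hxK, hxR⟩ => ⟨hxR, fun y hy => hxK.2 y (hR hy)⟩,
    fun ⟨hxR, hx⟩ => ⟨⟨hR hxR, fun y hy => ?_⟩, hxR⟩⟩⟩
  exact (hzK.2 y hy).trans (hx z hzR)

theorem vectorSpan_le_ker_of_forall_eq {l : V →ₗ[ℝ] ℝ} {c : ℝ} (h : ∀ x ∈ X, l x = c) :
    vectorSpan ℝ X ≤ LinearMap.ker l := by
  rw [vectorSpan_def, Submodule.span_le]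
  rintro _ ⟨a, ha, b, hb, rfl⟩
  simp [h a ha, h b hb]

theorem IsFaceOf.eq_of_subset_of_adim_eq (hK : IsFaceOf K P) (hKR : K ⊆ R) (hRP : R ⊆ P)
    (hne : K.Nonempty) [FiniteDimensional ℝ (vectorSpan ℝ R)] (hdim : adim K = adim R) :
    K = R := by
  have hspan : vectorSpan ℝ K = vectorSpan ℝ R :=
    Submodule.eq_of_le_of_finrank_eq (vectorSpan_mono ℝ hKR) hdim
  obtain ⟨l, rfl⟩ := hK
  obtain ⟨x₀, hx₀⟩ := hne
  have hconst : ∀ x ∈ {x ∈ P | ∀ y ∈ P, l y ≤ l x}, l x = l x₀ := fun x hx =>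
    le_antisymm (hx₀.2 x hx.1) (hx.2 x₀ hx₀.1)
  refine hKR.antisymm fun x hx => ⟨hRP hx, fun y hy => ?_⟩
  have hker := vectorSpan_le_ker_of_forall_eq hconst
    (hspan ▸ vsub_mem_vectorSpan ℝ hx (hKR hx₀))
  rw [LinearMap.mem_ker, vsub_eq_sub, map_sub, sub_eq_zero] at hker
  exact hker ▸ hx₀.2 y hy

end Faces

section Polytopes

variable {F S : Set V}

theorem IsFaceOf.nonempty_of_convexHull (hS : S.Finite) (hne : S.Nonempty)
    (h : IsFaceOf F (convexHull ℝ S)) : F.Nonempty := by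
  obtain ⟨l, rfl⟩ := h
  obtain ⟨x, hxS, hx⟩ := Set.exists_max_image S l hS hne
  exact ⟨x, subset_convexHull ℝ S hxS, fun y hy =>
    convexHull_min (fun s hs => hx s hs) (convex_halfSpace_le l.isLinear (l x)) hy⟩

open Classical in
theorem IsFaceOf.eq_convexHull_inter (hS : S.Finite) (h : IsFaceOf F (convexHull ℝ S)) :
    F = convexHull ℝ (S ∩ F) := by
  refine Subset.antisymm (fun x hx => ?_)
    (convexHull_min inter_subset_right (h.convex (convex_convexHull ℝ S)))
  obtain ⟨l, rfl⟩ := h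
  have hxS := hx.1
  rw [hS.convexHull_eq] at hxS
  obtain ⟨wt, hw0, hw1, hx'⟩ := hxS
  have hmax : ∀ y ∈ hS.toFinset, l y ≤ l x := fun y hy =>
    hx.2 y (subset_convexHull ℝ S (hS.mem_toFinset.1 hy))
  have hlx : ∑ y ∈ hS.toFinset, wt y * l y = l x := by
    rw [← hx', Finset.centerMass_eq_of_sum_1 _ _ hw1]
    simp
  -- the convex combination `∑ wt y • y` attains the maximum of `l` only if every `y` in its
  -- support does
  have hzero : ∀ y ∈ hS.toFinset, wt y * (l x - l y) = 0 := by
    refine (Finset.sum_eq_zero_iff_of_nonneg fun y hy =>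
      mul_nonneg (hw0 y (hS.mem_toFinset.1 hy)) (sub_nonneg.2 (hmax y hy))).1 ?_
    simp only [mul_sub, Finset.sum_sub_distrib, ← Finset.sum_mul, hw1, hlx]
    ring
  rw [← hx', ← Finset.centerMass_filter_ne_zero]
  refine Finset.centerMass_mem_convexHull _ (fun y hy => hw0 y (by simp_all))
    (by rw [Finset.sum_filter_ne_zero, hw1]; exact one_pos) fun y hy => ?_
  obtain ⟨hyS, hwy⟩ := Finset.mem_filter.1 hy
  have hly : l y = l x := by
    have := hzero y hyS
    simp only [mul_eq_zero, hwy, false_or, sub_eq_zero] at this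
    exact this.symm
  exact ⟨hS.mem_toFinset.1 hyS, subset_convexHull ℝ S (hS.mem_toFinset.1 hyS),
    fun z hz => hly ▸ hx.2 z hz⟩

end Polytopes

section Dimension

variable {B T X : Set V}

theorem adim_convexHull (X : Set V) : adim (convexHull ℝ X) = adim X := by
  rw [adim, adim, ← direction_affineSpan, affineSpan_convexHull, direction_affineSpan]

theorem adim_eq_zero_of_subset_singleton {a : V} (h : X ⊆ {a}) : adim X = 0 := by
  rw [adim, le_bot_iff.1 ((vectorSpan_mono ℝ h).trans (vectorSpan_singleton ℝ a).le),
    finrank_bot]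

theorem sub_notMem_vectorSpan_of_forall_eq {l : V →ₗ[ℝ] ℝ} {c : ℝ} (hX : ∀ x ∈ X, l x = c)
    {p t : V} (hp : p ∈ X) (ht : l t ≠ c) : t - p ∉ vectorSpan ℝ X := by
  intro h
  have := vectorSpan_le_ker_of_forall_eq hX h
  rw [LinearMap.mem_ker, map_sub, hX p hp, sub_eq_zero] at this
  exact ht this

theorem adim_union_eq_add_one {p t₀ : V} (hp : p ∈ B) [FiniteDimensional ℝ (vectorSpan ℝ B)]
    (ht₀ : t₀ ∈ T) (hT : ∀ t ∈ T, t - p ∈ ℝ ∙ (t₀ - p)) (hout : t₀ - p ∉ vectorSpan ℝ B) :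
    adim (B ∪ T) = adim B + 1 := by
  have hT' : Submodule.span ℝ ((· -ᵥ p) '' T) = ℝ ∙ (t₀ - p) := by
    refine le_antisymm (Submodule.span_le.2 ?_) (Submodule.span_mono ?_)
    · rintro _ ⟨t, ht, rfl⟩
      exact hT t ht
    · exact singleton_subset_iff.2 ⟨t₀, ht₀, rfl⟩
  have hspan : vectorSpan ℝ (B ∪ T) = vectorSpan ℝ B ⊔ ℝ ∙ (t₀ - p) := by
    rw [vectorSpan_eq_span_vsub_set_right ℝ (mem_union_left T hp), image_union,
      Submodule.span_union, ← vectorSpan_eq_span_vsub_set_right ℝ hp, hT']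
  have hd : t₀ - p ≠ 0 := fun h => hout (by rw [h]; exact Submodule.zero_mem _)
  have hsum := Submodule.finrank_sup_add_finrank_inf_eq (vectorSpan ℝ B) (ℝ ∙ (t₀ - p))
  rw [(Submodule.disjoint_span_singleton_of_notMem hout).eq_bot, finrank_bot,
    finrank_span_singleton hd] at hsum
  rw [adim, adim, hspan]
  omega

end Dimension

namespace SimpleGraph

variable {α β : Type*} {G : SimpleGraph α} {H : SimpleGraph β} (π : β → α)

theorem Walk.exists_walk_length_le_of_adj_imp
    (hπ : ∀ ⦃x y⦄, H.Adj x y → π x = π y ∨ G.Adj (π x) (π y)) {x y : β} (W : H.Walk x y) :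
    ∃ p : G.Walk (π x) (π y), p.length ≤ W.length := by
  induction W with
  | nil => exact ⟨nil, le_rfl⟩
  | cons h _ ih =>
    obtain ⟨p, hp⟩ := ih
    rcases hπ h with heq | hadj
    · exact ⟨p.copy heq.symm rfl, by simp only [length_copy, length_cons]; omega⟩
    · exact ⟨cons hadj p, by simp only [length_cons]; omega⟩

theorem dist_le_dist_of_adj_imp (hπ : ∀ ⦃x y⦄, H.Adj x y → π x = π y ∨ G.Adj (π x) (π y))
    {x y : β} (hreach : G.Reachable (π x) (π y) → H.Reachable x y) :
    G.dist (π x) (π y) ≤ H.dist x y := by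
  by_cases h : H.Reachable x y
  · obtain ⟨W, hW⟩ := h.exists_walk_length_eq_dist
    obtain ⟨p, hp⟩ := W.exists_walk_length_le_of_adj_imp π hπ
    exact (dist_le p).trans (hW ▸ hp)
  · rw [dist_eq_zero_of_not_reachable (mt hreach h)]
    exact Nat.zero_le _

end SimpleGraph

theorem dualGraph_eq_bot_of_adim_lt_two {P : Set V} (h : adim P < 2) : dualGraph P = ⊥ := by
  ext F F'
  simp only [SimpleGraph.bot_adj, iff_false]
  rintro ⟨-, -, -, -, hdim⟩
  omega

theorem dualDist_eq_zero_of_adim_lt_two {P F F' : Set V} (h : adim P < 2) :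
    dualDist P F F' = 0 := by
  rw [dualDist, dualGraph_eq_bot_of_adim_lt_two h, SimpleGraph.dist_bot]

theorem IsFaceOf.exists_isFaceOf_convexHull_union {Q F : Set V} {l : V →ₗ[ℝ] ℝ} {c : ℝ}
    {v a b : V} (hQ : ∀ x ∈ Q, l x = c) (ha : l a ≠ c) (hv : v ∈ Q)
    (hseg : v ∈ openSegment ℝ a b) (hF : IsFaceOf F Q) (hne : F.Nonempty) :
    ∃ K, IsFaceOf K (convexHull ℝ (Q ∪ {a, b})) ∧ K ∩ Q = F ∧ a ∈ K := by
  obtain ⟨f, rfl⟩ := hF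
  obtain ⟨x₀, hx₀Q, hx₀⟩ := hne
  -- tilt `f` along `l` until the apex `a` reaches the level of the face
  set g := f + ((f x₀ - f a) / (l a - c)) • l with hg
  set M := f x₀ + (f x₀ - f a) / (l a - c) * c
  have hgQ : ∀ x ∈ Q, g x = f x + (f x₀ - f a) / (l a - c) * c := fun x hx => by
    simp [hg, hQ x hx]
  have hga : g a = M := by
    simp only [hg, M, LinearMap.add_apply, LinearMap.smul_apply, smul_eq_mul]
    field_simp [sub_ne_zero.2 ha]
    ring
  have hgb : g b ≤ M := by
    obtain ⟨α, β, hα, hβ, hαβ, rfl⟩ := hseg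
    have hgv : g (α • a + β • b) ≤ M := by
      rw [hgQ _ hv]
      linarith [hx₀ _ hv]
    rw [map_add, map_smul, map_smul, hga, smul_eq_mul, smul_eq_mul] at hgv
    have hM : α * M + β * M = M := by rw [← add_mul, hαβ, one_mul]
    exact le_of_mul_le_mul_left (by linarith) hβ
  have hle : ∀ y ∈ convexHull ℝ (Q ∪ {a, b}), g y ≤ M := by
    refine fun y hy => convexHull_min (t := {y | g y ≤ M}) ?_ (convex_halfSpace_le g.isLinear M) hy
    rintro z (hz | rfl | rfl)
    · exact (hgQ z hz).trans_le (by linarith [hx₀ z hz])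
    · exact hga.le
    · exact hgb
  have haK : a ∈ convexHull ℝ (Q ∪ {a, b}) := subset_convexHull ℝ _ (by simp)
  refine ⟨{x ∈ convexHull ℝ (Q ∪ {a, b}) | g x = M}, isFaceOf_setOf_eq hle ⟨a, haK, hga⟩,
    Set.ext fun x => ⟨fun ⟨⟨_, hgx⟩, hxQ⟩ => ⟨hxQ, fun y hy => ?_⟩, fun ⟨hxQ, hx⟩ => ?_⟩,
    haK, hga⟩
  · rw [hgQ x hxQ] at hgx
    linarith [hx₀ y hy]
  · refine ⟨⟨subset_convexHull ℝ _ (Or.inl hxQ), ?_⟩, hxQ⟩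
    rw [hgQ x hxQ]
    linarith [hx x₀ hx₀Q, hx₀ x hxQ]

-- `Q = conv S` lies in the hyperplane `l = c`; `u` and `w` are the apices.
structure OnePointSuspension (V : Type*) [AddCommGroup V] [Module ℝ V] where
  S : Set V
  l : V →ₗ[ℝ] ℝ
  c : ℝ
  v : V
  u : V
  w : V
  finite_S : S.Finite
  map_eq : ∀ x ∈ convexHull ℝ S, l x = c
  v_mem : v ∈ convexHull ℝ S
  map_u_ne : l u ≠ c
  map_w_ne : l w ≠ c
  v_mem_openSegment : v ∈ openSegment ℝ u w

namespace OnePointSuspension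

variable (C : OnePointSuspension V) {B F F' G G' K T X : Set V} {a a' : V}

def Q : Set V := convexHull ℝ C.S

def Qt : Set V := convexHull ℝ (C.Q ∪ {C.u, C.w})

open Classical in
/-- The facet of `Qt` over the facet `F` of `Q`: `S_v(F)` if `v ∈ F`, else the pyramid `F * a`. -/
def lift (F : Set V) (a : V) : Set V :=
  if C.v ∈ F then convexHull ℝ (F ∪ {C.u, C.w}) else convexHull ℝ (F ∪ {a})

theorem convex_Q : Convex ℝ C.Q := convex_convexHull ℝ _

theorem convex_Qt : Convex ℝ C.Qt := convex_convexHull ℝ _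

theorem Q_subset_Qt : C.Q ⊆ C.Qt := subset_union_left.trans (subset_convexHull ℝ _)

theorem apex_mem_Qt (ha : a ∈ ({C.u, C.w} : Set V)) : a ∈ C.Qt :=
  subset_convexHull ℝ _ (Or.inr ha)

theorem map_apex_ne (ha : a ∈ ({C.u, C.w} : Set V)) : C.l a ≠ C.c := by
  rcases ha with rfl | rfl
  exacts [C.map_u_ne, C.map_w_ne]

theorem apex_notMem_Q (ha : a ∈ ({C.u, C.w} : Set V)) : a ∉ C.Q :=
  fun h => C.map_apex_ne ha (C.map_eq a h)

theorem Qt_eq_convexHull : C.Qt = convexHull ℝ (C.S ∪ {C.u, C.w}) :=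
  convexHull_convexHull_union_left _ _

theorem finiteDimensional_vectorSpan (hX : X ⊆ C.Qt) : FiniteDimensional ℝ (vectorSpan ℝ X) := by
  have : FiniteDimensional ℝ (vectorSpan ℝ C.Qt) := by
    rw [C.Qt_eq_convexHull, ← direction_affineSpan, affineSpan_convexHull, direction_affineSpan]
    exact finiteDimensional_vectorSpan_of_finite ℝ (C.finite_S.union (toFinite _))
  exact Submodule.finiteDimensional_of_le (vectorSpan_mono ℝ hX)

theorem nonempty_of_isFaceOf_Q (hF : IsFaceOf F C.Q) : F.Nonempty :=
  hF.nonempty_of_convexHull C.finite_S (convexHull_nonempty_iff.1 ⟨C.v, C.v_mem⟩)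

theorem w_sub_v_mem_span : C.w - C.v ∈ ℝ ∙ (C.u - C.v) := by
  obtain ⟨α, β, hα, hβ, hαβ, hv⟩ := C.v_mem_openSegment
  refine Submodule.mem_span_singleton.2 ⟨-(α / β), ?_⟩
  obtain rfl : α = 1 - β := by linarith
  have := hβ.ne'
  rw [← hv]
  match_scalars <;> field_simp; ring

theorem adim_union_apices (hB : B ⊆ C.Q) (hBne : B.Nonempty) (hT : T ⊆ {C.u, C.w})
    (hTne : T.Nonempty) (hv : C.u ∈ T → C.w ∈ T → C.v ∈ B) : adim (B ∪ T) = adim B + 1 := by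
  have := C.finiteDimensional_vectorSpan (hB.trans C.Q_subset_Qt)
  have hl : ∀ x ∈ B, C.l x = C.c := fun x hx => C.map_eq x (hB hx)
  by_cases huw : C.u ∈ T ∧ C.w ∈ T
  · have hvB := hv huw.1 huw.2
    refine adim_union_eq_add_one hvB huw.1 (fun t ht => ?_)
      (sub_notMem_vectorSpan_of_forall_eq hl hvB C.map_u_ne)
    rcases hT ht with rfl | rfl
    exacts [Submodule.mem_span_singleton_self _, C.w_sub_v_mem_span]
  · obtain ⟨t₀, ht₀⟩ := hTne
    obtain ⟨p, hp⟩ := hBne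
    have hT₀ : ∀ t ∈ T, t = t₀ := fun t ht => by
      rcases hT ht with rfl | rfl <;> rcases hT ht₀ with rfl | rfl <;> simp_all
    refine adim_union_eq_add_one hp ht₀
      (fun t ht => hT₀ t ht ▸ Submodule.mem_span_singleton_self _)
      (sub_notMem_vectorSpan_of_forall_eq hl hp (C.map_apex_ne (hT ht₀)))

theorem adim_Qt : adim C.Qt = adim C.Q + 1 := by
  rw [Qt, adim_convexHull]
  exact C.adim_union_apices subset_rfl ⟨C.v, C.v_mem⟩ subset_rfl (insert_nonempty _ _)
    fun _ _ => C.v_mem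

theorem v_mem_iff (hK : IsFaceOf K C.Qt) : C.v ∈ K ↔ C.u ∈ K ∧ C.w ∈ K := by
  have hu := C.apex_mem_Qt (Or.inl rfl)
  have hw := C.apex_mem_Qt (Or.inr rfl)
  exact ⟨fun hv => ⟨hK.isExtreme.left_mem_of_mem_openSegment hu hw hv C.v_mem_openSegment,
      hK.isExtreme.right_mem_of_mem_openSegment hu hw hv C.v_mem_openSegment⟩,
    fun h => (hK.convex C.convex_Qt).openSegment_subset h.1 h.2 C.v_mem_openSegment⟩

theorem not_isFaceOf_Q : ¬ IsFaceOf C.Q C.Qt :=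
  fun h => C.apex_notMem_Q (Or.inl rfl) ((C.v_mem_iff h).1 C.v_mem).1

theorem eq_convexHull_inter_union (hK : IsFaceOf K C.Qt) :
    K = convexHull ℝ ((K ∩ C.Q) ∪ (K ∩ {C.u, C.w})) := by
  refine Subset.antisymm ?_ (convexHull_min (union_subset inter_subset_left inter_subset_left)
    (hK.convex C.convex_Qt))
  rw [C.Qt_eq_convexHull] at hK
  conv_lhs => rw [hK.eq_convexHull_inter (C.finite_S.union (toFinite _))]
  refine convexHull_mono ?_
  rintro x ⟨hx | hx, hxK⟩
  exacts [Or.inl ⟨hxK, subset_convexHull ℝ _ hx⟩, Or.inr ⟨hxK, hx⟩]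

theorem inter_Q_nonempty (hK : IsFaceOf K C.Qt) (hdim : adim K ≠ 0) : (K ∩ C.Q).Nonempty := by
  by_contra h
  rw [not_nonempty_iff_eq_empty] at h
  have huw : ¬ (C.u ∈ K ∧ C.w ∈ K) := fun hboth =>
    h.subset ⟨(C.v_mem_iff hK).2 hboth, C.v_mem⟩
  obtain ⟨a, ha⟩ : ∃ a, K ∩ {C.u, C.w} ⊆ {a} := by
    by_cases hu : C.u ∈ K
    · refine ⟨C.u, fun x ⟨hxK, hx⟩ => ?_⟩
      rcases hx with rfl | rfl
      exacts [rfl, (huw ⟨hu, hxK⟩).elim]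
    · refine ⟨C.w, fun x ⟨hxK, hx⟩ => ?_⟩
      rcases hx with rfl | rfl
      exacts [(hu hxK).elim, rfl]
  rw [C.eq_convexHull_inter_union hK, h, empty_union, adim_convexHull] at hdim
  exact hdim (adim_eq_zero_of_subset_singleton ha)

theorem adim_eq_adim_inter_Q_add_one (hK : IsFaceOf K C.Qt) (hne : (K ∩ C.Q).Nonempty)
    (hKQ : ¬ K ⊆ C.Q) : adim K = adim (K ∩ C.Q) + 1 := by
  have hT : (K ∩ {C.u, C.w}).Nonempty := by
    refine nonempty_iff_ne_empty.2 fun h => hKQ ?_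
    rw [C.eq_convexHull_inter_union hK, h, union_empty]
    exact convexHull_min inter_subset_right C.convex_Q
  conv_lhs => rw [C.eq_convexHull_inter_union hK]
  rw [adim_convexHull]
  exact C.adim_union_apices inter_subset_right hne inter_subset_right hT
    fun hu hw => ⟨(C.v_mem_iff hK).2 ⟨hu.1, hw.1⟩, C.v_mem⟩

theorem isFacetOf_inter_Q (hQ : adim C.Q ≠ 0) (hG : IsFacetOf G C.Qt) :
    IsFacetOf (G ∩ C.Q) C.Q := by
  obtain ⟨hGf, hGdim⟩ := hG
  have hGdim' : adim G = adim C.Q := by have := C.adim_Qt; omega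
  have hne := C.inter_Q_nonempty hGf (by omega)
  have := C.finiteDimensional_vectorSpan C.Q_subset_Qt
  have hGQ : ¬ G ⊆ C.Q := fun hsub => C.not_isFaceOf_Q
    (hGf.eq_of_subset_of_adim_eq hsub C.Q_subset_Qt (hne.mono inter_subset_left) hGdim' ▸ hGf)
  have := C.adim_eq_adim_inter_Q_add_one hGf hne hGQ
  exact ⟨hGf.inter_of_subset C.Q_subset_Qt hne, by omega⟩

theorem inter_Q_eq_or_adj (hQ : 2 ≤ adim C.Q) (h : (dualGraph C.Qt).Adj G G') :
    G ∩ C.Q = G' ∩ C.Q ∨ (dualGraph C.Q).Adj (G ∩ C.Q) (G' ∩ C.Q) := by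
  obtain ⟨-, hG, hG', hR, hRdim⟩ := h
  have hQt := C.adim_Qt
  have hGQ := C.isFacetOf_inter_Q (by omega) hG
  have hG'Q := C.isFacetOf_inter_Q (by omega) hG'
  have hne := C.inter_Q_nonempty hR (by omega)
  by_cases hRQ : G ∩ G' ⊆ C.Q
  · -- the ridge `G ∩ G'` is then a facet of `Q` contained in both traces, hence equal to both
    have hRne : (G ∩ G').Nonempty := hne.mono inter_subset_left
    have := C.finiteDimensional_vectorSpan (inter_subset_right.trans C.Q_subset_Qt : G ∩ C.Q ⊆ _)
    have := C.finiteDimensional_vectorSpan (inter_subset_right.trans C.Q_subset_Qt : G' ∩ C.Q ⊆ _)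
    have e₁ := hR.eq_of_subset_of_adim_eq (R := G ∩ C.Q) (fun x hx => ⟨hx.1, hRQ hx⟩)
      (inter_subset_left.trans hG.1.subset) hRne (by have := hGQ.2; omega)
    have e₂ := hR.eq_of_subset_of_adim_eq (R := G' ∩ C.Q) (fun x hx => ⟨hx.2, hRQ hx⟩)
      (inter_subset_left.trans hG'.1.subset) hRne (by have := hG'Q.2; omega)
    exact Or.inl (e₁.symm.trans e₂)
  · have hinter : G ∩ C.Q ∩ (G' ∩ C.Q) = G ∩ G' ∩ C.Q := (inter_inter_distrib_right _ _ _).symm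
    have hdim := C.adim_eq_adim_inter_Q_add_one hR hne hRQ
    refine Or.inr ⟨fun heq => ?_, hGQ, hG'Q, hinter ▸ hR.inter_of_subset C.Q_subset_Qt hne,
      by rw [hinter]; omega⟩
    rw [← heq, inter_self] at hinter
    have := hGQ.2
    rw [hinter] at this
    omega

theorem exists_isFaceOf_inter_Q_eq (hF : IsFaceOf F C.Q) (ha : a ∈ ({C.u, C.w} : Set V)) :
    ∃ K, IsFaceOf K C.Qt ∧ K ∩ C.Q = F ∧ a ∈ K := by
  rcases ha with rfl | rfl
  · exact hF.exists_isFaceOf_convexHull_union C.map_eq C.map_u_ne C.v_mem C.v_mem_openSegment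
      (C.nonempty_of_isFaceOf_Q hF)
  · rw [Qt, pair_comm]
    exact hF.exists_isFaceOf_convexHull_union C.map_eq C.map_w_ne C.v_mem
      (openSegment_symm ℝ C.u C.w ▸ C.v_mem_openSegment) (C.nonempty_of_isFaceOf_Q hF)

theorem eq_lift (hK : IsFaceOf K C.Qt) (ha : a ∈ ({C.u, C.w} : Set V)) (haK : a ∈ K) :
    K = C.lift (K ∩ C.Q) a := by
  conv_lhs => rw [C.eq_convexHull_inter_union hK]
  unfold lift
  split_ifs with hv
  · rw [inter_eq_right.2 (pair_subset_iff.2 ((C.v_mem_iff hK).1 hv.1))]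
  · suffices K ∩ {C.u, C.w} = {a} by rw [this]
    refine Subset.antisymm (fun x ⟨hxK, hx⟩ => by_contra fun hxa => hv ⟨?_, C.v_mem⟩)
      (singleton_subset_iff.2 ⟨haK, ha⟩)
    rw [C.v_mem_iff hK]
    rcases hx with rfl | rfl <;> rcases ha with rfl | rfl
    exacts [(hxa rfl).elim, ⟨hxK, haK⟩, ⟨haK, hxK⟩, (hxa rfl).elim]

theorem isFaceOf_lift (hF : IsFaceOf F C.Q) (ha : a ∈ ({C.u, C.w} : Set V)) :
    IsFaceOf (C.lift F a) C.Qt ∧ C.lift F a ∩ C.Q = F := by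
  obtain ⟨K, hK, rfl, haK⟩ := C.exists_isFaceOf_inter_Q_eq hF ha
  rw [← C.eq_lift hK ha haK]
  exact ⟨hK, rfl⟩

theorem apex_mem_lift (ha : a ∈ ({C.u, C.w} : Set V)) : a ∈ C.lift F a := by
  unfold lift
  split_ifs
  exacts [subset_convexHull ℝ _ (Or.inr ha), subset_convexHull ℝ _ (Or.inr rfl)]

theorem isFacetOf_lift (hF : IsFacetOf F C.Q) (ha : a ∈ ({C.u, C.w} : Set V)) :
    IsFacetOf (C.lift F a) C.Qt := by
  obtain ⟨hK, hKQ⟩ := C.isFaceOf_lift hF.1 ha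
  have hdim := C.adim_eq_adim_inter_Q_add_one hK (by rw [hKQ]; exact C.nonempty_of_isFaceOf_Q hF.1)
    fun h => C.apex_notMem_Q ha (h (C.apex_mem_lift ha))
  refine ⟨hK, ?_⟩
  rw [hdim, hKQ, C.adim_Qt, ← hF.2]

theorem lift_adj (h : (dualGraph C.Q).Adj F F') :
    (dualGraph C.Qt).Adj (C.lift F C.u) (C.lift F' C.u) := by
  obtain ⟨hne, hF, hF', hR⟩ := h
  have hu : C.u ∈ ({C.u, C.w} : Set V) := Or.inl rfl
  obtain ⟨hG, hGQ⟩ := C.isFaceOf_lift hF.1 hu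
  obtain ⟨hG', hG'Q⟩ := C.isFaceOf_lift hF'.1 hu
  have hinter : C.lift F C.u ∩ C.lift F' C.u ∩ C.Q = F ∩ F' := by
    rw [inter_inter_distrib_right, hGQ, hG'Q]
  have hI := hG.inter hG' ⟨C.u, C.apex_mem_lift hu, C.apex_mem_lift hu⟩
  have hdim := C.adim_eq_adim_inter_Q_add_one hI (hinter ▸ C.nonempty_of_isFaceOf_Q hR.1)
    fun h => C.apex_notMem_Q hu (h ⟨C.apex_mem_lift hu, C.apex_mem_lift hu⟩)
  refine ⟨fun heq => hne (by rw [← hGQ, ← hG'Q, heq]), C.isFacetOf_lift hF hu,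
    C.isFacetOf_lift hF' hu, hI, ?_⟩
  rw [hdim, hinter, C.adim_Qt]
  have := hR.2
  omega

theorem lift_u_adj_lift_w (hF : IsFacetOf F C.Q) (hv : C.v ∉ F) :
    (dualGraph C.Qt).Adj (C.lift F C.u) (C.lift F C.w) := by
  have hu : C.u ∈ ({C.u, C.w} : Set V) := Or.inl rfl
  have hw : C.w ∈ ({C.u, C.w} : Set V) := Or.inr rfl
  obtain ⟨hG, hGQ⟩ := C.isFaceOf_lift hF.1 hu
  obtain ⟨hG', hG'Q⟩ := C.isFaceOf_lift hF.1 hw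
  have hwG : C.w ∉ C.lift F C.u := fun h =>
    hv (hGQ ▸ ⟨(C.v_mem_iff hG).2 ⟨C.apex_mem_lift hu, h⟩, C.v_mem⟩)
  have huG' : C.u ∉ C.lift F C.w := fun h =>
    hv (hG'Q ▸ ⟨(C.v_mem_iff hG').2 ⟨h, C.apex_mem_lift hw⟩, C.v_mem⟩)
  have hFG : F ⊆ C.lift F C.u ∩ C.lift F C.w :=
    subset_inter (hGQ.symm.subset.trans inter_subset_left)
      (hG'Q.symm.subset.trans inter_subset_left)
  have hI := hG.inter hG' ((C.nonempty_of_isFaceOf_Q hF.1).mono hFG)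
  have hIeq : C.lift F C.u ∩ C.lift F C.w = F := by
    have hapices : C.lift F C.u ∩ C.lift F C.w ∩ {C.u, C.w} = ∅ := by
      refine eq_empty_of_forall_notMem fun x ⟨⟨hxG, hxG'⟩, hx⟩ => ?_
      rcases hx with rfl | rfl
      exacts [huG' hxG', hwG hxG]
    rw [C.eq_convexHull_inter_union hI, inter_inter_distrib_right, hGQ, hG'Q, inter_self,
      hapices, union_empty, (hF.1.convex C.convex_Q).convexHull_eq]
  refine ⟨fun heq => huG' (heq ▸ C.apex_mem_lift hu), C.isFacetOf_lift hF hu,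
    C.isFacetOf_lift hF hw, hI, ?_⟩
  rw [hIeq, C.adim_Qt, ← hF.2]

def liftHom : dualGraph C.Q →g dualGraph C.Qt := ⟨fun F => C.lift F C.u, C.lift_adj⟩

theorem reachable_lift_u (hF : IsFacetOf F C.Q) (ha : a ∈ ({C.u, C.w} : Set V)) :
    (dualGraph C.Qt).Reachable (C.lift F a) (C.lift F C.u) := by
  rcases ha with rfl | rfl
  · rfl
  · by_cases hv : C.v ∈ F
    · simp only [lift, if_pos hv, SimpleGraph.Reachable.refl]
    · exact (C.lift_u_adj_lift_w hF hv).symm.reachable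

theorem reachable_lift (hF : IsFacetOf F C.Q) (hF' : IsFacetOf F' C.Q)
    (ha : a ∈ ({C.u, C.w} : Set V)) (ha' : a' ∈ ({C.u, C.w} : Set V))
    (h : (dualGraph C.Q).Reachable F F') :
    (dualGraph C.Qt).Reachable (C.lift F a) (C.lift F' a') :=
  (C.reachable_lift_u hF ha).trans ((h.map C.liftHom).trans (C.reachable_lift_u hF' ha').symm)

theorem exists_eq_lift
    (ht : (C.v ∈ F ∧ K = convexHull ℝ (F ∪ {C.u, C.w})) ∨
      (C.v ∉ F ∧ (K = convexHull ℝ (F ∪ {C.u}) ∨ K = convexHull ℝ (F ∪ {C.w})))) :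
    ∃ a ∈ ({C.u, C.w} : Set V), K = C.lift F a := by
  rcases ht with ⟨hv, rfl⟩ | ⟨hv, rfl | rfl⟩
  · exact ⟨C.u, Or.inl rfl, (if_pos hv).symm⟩
  · exact ⟨C.u, Or.inl rfl, (if_neg hv).symm⟩
  · exact ⟨C.w, Or.inr rfl, (if_neg hv).symm⟩

end OnePointSuspension

/-- For facets `F₁, F₂` of `Q`, let `Ft i` be the facet
`S_v(F i) = conv (F i ∪ {u,w})` of the one-point-suspension if `v ∈ F i`, or
either of the pyramids `F i * u = conv (F i ∪ {u})`, `F i * w` if `v ∉ F i`.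
Then the dual distance between `Ft 1` and `Ft 2` in `Qt` is at least the dual
distance between `F₁` and `F₂` in `Q`. -/
theorem stmt8 {V : Type*} [AddCommGroup V] [Module ℝ V]
    (Q Qt : Set V) (v u w : V) (h : IsOPS Q Qt v u w)
    (F₁ F₂ Ft₁ Ft₂ : Set V) (h1 : IsFacetOf F₁ Q) (h2 : IsFacetOf F₂ Q)
    (ht1 : (v ∈ F₁ ∧ Ft₁ = convexHull ℝ (F₁ ∪ {u, w})) ∨
      (v ∉ F₁ ∧ (Ft₁ = convexHull ℝ (F₁ ∪ {u}) ∨ Ft₁ = convexHull ℝ (F₁ ∪ {w}))))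
    (ht2 : (v ∈ F₂ ∧ Ft₂ = convexHull ℝ (F₂ ∪ {u, w})) ∨
      (v ∉ F₂ ∧ (Ft₂ = convexHull ℝ (F₂ ∪ {u}) ∨ Ft₂ = convexHull ℝ (F₂ ∪ {w})))) :
    dualDist Q F₁ F₂ ≤ dualDist Qt Ft₁ Ft₂ := by
  obtain ⟨⟨S, hS, rfl⟩, hv, ⟨l, c, hl, hlu, hlw⟩, hseg, rfl⟩ := h
  let C : OnePointSuspension V :=
    ⟨S, l, c, v, u, w, hS, hl, hv.subset (mem_singleton v), hlu.ne, hlw.ne', hseg⟩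
  obtain ⟨a₁, ha₁, rfl⟩ := C.exists_eq_lift ht1
  obtain ⟨a₂, ha₂, rfl⟩ := C.exists_eq_lift ht2
  rcases lt_or_ge (adim C.Q) 2 with hdim | hdim
  · exact (dualDist_eq_zero_of_adim_lt_two hdim).trans_le (Nat.zero_le _)
  have key := SimpleGraph.dist_le_dist_of_adj_imp (G := dualGraph C.Q) (H := dualGraph C.Qt)
    (· ∩ C.Q) (fun _ _ => C.inter_Q_eq_or_adj hdim) (x := C.lift F₁ a₁) (y := C.lift F₂ a₂)
  simp only [(C.isFaceOf_lift h1.1 ha₁).2, (C.isFaceOf_lift h2.1 ha₂).2] at key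
  exact key (C.reachable_lift h1 h2 ha₁ ha₂)
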